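/- arXiv:2411.15088 — 3 statements merged into one kernel-verified Lean document; each statement's English description precedes it below -/
import Mathlib

section
/- The coefficients of the chromatic polynomial of a finite simple graph alternate in sign: if G has n vertices and P_G(λ) = Σ_{i=0}^{n} c_i λ^i, then (−1)^{n−i} c_i ≥ 0 for every i with 0 ≤ i ≤ n. -/
open Polynomial

/-- The number of proper colorings of the finite simple graph `G` with `k` colors. -/
def SimpleGraph.numColorings {V : Type*} [Fintype V] [DecidableEq V]
    (G : SimpleGraph V) [DecidableRel G.Adj] (k : ℕ) : ℕ :=
  Fintype.card {f : V → Fin k // ∀ a b, G.Adj a b → f a ≠ f b}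

/-!
Deletion–contraction: for an edge `ab` of `G`, a proper coloring of `G - ab` either separates `a`
and `b`, and is then a proper coloring of `G`, or it does not, and then it is a proper coloring
of the contraction `G / ab`. Hence `P_G = P_{G - ab} - P_{G / ab}`, and by induction on the number
`n` of vertices and then on `G`, the polynomial `(-1) ^ n P_G(-X)` has nonnegative coefficients: it
is `X ^ n` for the edgeless graph, and the recurrence turns into
`(-1) ^ n P_G(-X) = (-1) ^ n P_{G - ab}(-X) + (-1) ^ (n - 1) P_{G / ab}(-X)`.
-/

namespace Polynomial

/-- Writing `n + i` rather than `n - i` in the exponent avoids truncated subtraction and also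
constrains the coefficients above degree `n`, which `HasAlternatingCoeffs.sub` relies on. -/
def HasAlternatingCoeffs (n : ℕ) (p : ℤ[X]) : Prop :=
  ∀ i, 0 ≤ (-1) ^ (n + i) * p.coeff i

theorem hasAlternatingCoeffs_X_pow (n : ℕ) : HasAlternatingCoeffs n (X ^ n) := by
  intro i
  rw [coeff_X_pow]
  split_ifs with h
  · simp [h, ← two_mul, pow_mul]
  · simp

theorem HasAlternatingCoeffs.sub {n : ℕ} {p q : ℤ[X]} (hp : HasAlternatingCoeffs (n + 1) p)
    (hq : HasAlternatingCoeffs n q) : HasAlternatingCoeffs (n + 1) (p - q) := by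
  intro i
  have hpi := hp i
  have hqi := hq i
  rw [add_right_comm, pow_succ] at hpi ⊢
  rw [coeff_sub]
  linarith

theorem HasAlternatingCoeffs.coeff_nonneg {n : ℕ} {p : ℤ[X]} (hp : HasAlternatingCoeffs n p)
    {i : ℕ} (hi : i ≤ n) : 0 ≤ (-1) ^ (n - i) * p.coeff i := by
  have h := hp i
  rwa [show n + i = n - i + 2 * i by omega, pow_add, pow_mul, neg_one_sq, one_pow, mul_one] at h

theorem eq_of_eval_natCast_eq {R : Type*} [CommRing R] [IsDomain R] [CharZero R] {p q : R[X]}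
    (h : ∀ k : ℕ, p.eval (k : R) = q.eval (k : R)) : p = q := by
  refine eq_of_infinite_eval_eq p q
    ((Set.infinite_range_of_injective Nat.cast_injective).mono ?_)
  rintro _ ⟨k, rfl⟩
  exact h k

end Polynomial

namespace SimpleGraph

variable {V W α : Type*}

def image (π : V → W) (G : SimpleGraph V) : SimpleGraph W :=
  fromRel fun x y => ∃ u v, G.Adj u v ∧ π u = x ∧ π v = y

theorem forall_image_adj_ne_iff {G : SimpleGraph V} {π : V → W}
    (hπ : ∀ u v, G.Adj u v → π u ≠ π v) (g : W → α) :
    (∀ x y, (G.image π).Adj x y → g x ≠ g y) ↔ ∀ u v, G.Adj u v → g (π u) ≠ g (π v) := by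
  constructor
  · intro hg u v huv
    exact hg _ _ ((fromRel_adj _ _ _).2 ⟨hπ u v huv, Or.inl ⟨u, v, huv, rfl, rfl⟩⟩)
  · rintro hg x y ⟨-, ⟨u, v, huv, rfl, rfl⟩ | ⟨u, v, huv, rfl, rfl⟩⟩
    · exact hg u v huv
    · exact (hg u v huv).symm

variable {a b : V}

theorem forall_adj_ne_iff_deleteEdges (G : SimpleGraph V) (hab : G.Adj a b) (f : V → α) :
    (∀ x y, G.Adj x y → f x ≠ f y) ↔
      (∀ x y, (G.deleteEdges {s(a, b)}).Adj x y → f x ≠ f y) ∧ f a ≠ f b := by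
  constructor
  · intro hf
    exact ⟨fun x y hxy => hf x y (deleteEdges_le _ hxy), hf a b hab⟩
  · rintro ⟨hf, hfab⟩ x y hxy
    by_cases he : s(x, y) = s(a, b)
    · rcases Sym2.eq_iff.1 he with ⟨rfl, rfl⟩ | ⟨rfl, rfl⟩
      · exact hfab
      · exact hfab.symm
    · exact hf x y ((deleteEdges_adj ..).2 ⟨hxy, he⟩)

variable [DecidableEq V]

def mergeVertex (hba : b ≠ a) (x : V) : {x // x ≠ a} :=
  if h : x = a then ⟨b, hba⟩ else ⟨x, h⟩

@[simp]
theorem mergeVertex_val (hba : b ≠ a) (x : {x // x ≠ a}) : mergeVertex hba x = x := by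
  simp [mergeVertex, x.2]

theorem apply_mergeVertex {f : V → α} (hf : f a = f b) (hba : b ≠ a) (x : V) :
    f (mergeVertex hba x) = f x := by
  by_cases hx : x = a
  · simp [mergeVertex, hx, hf]
  · simp [mergeVertex, hx]

theorem mergeVertex_ne_of_adj_deleteEdges (G : SimpleGraph V) (hba : b ≠ a) {u v : V}
    (huv : (G.deleteEdges {s(a, b)}).Adj u v) : mergeVertex hba u ≠ mergeVertex hba v := by
  rw [deleteEdges_adj] at huv
  obtain ⟨huv, hne⟩ := huv
  unfold mergeVertex
  split_ifs with hu hv hv <;> simp only [ne_eq, Subtype.mk.injEq]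
  · exact (huv.ne (hu.trans hv.symm)).elim
  · rintro rfl; simp_all
  · rintro rfl; simp_all [Sym2.eq_swap]
  · exact huv.ne

def contractEdge (G : SimpleGraph V) (hba : b ≠ a) : SimpleGraph {x // x ≠ a} :=
  (G.deleteEdges {s(a, b)}).image (mergeVertex hba)

def contractEdgeColoringEquiv (G : SimpleGraph V) (hba : b ≠ a) :
    {g : {x // x ≠ a} → α // ∀ x y, (G.contractEdge hba).Adj x y → g x ≠ g y} ≃
      {f : V → α // (∀ x y, (G.deleteEdges {s(a, b)}).Adj x y → f x ≠ f y) ∧ f a = f b} where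
  toFun g := ⟨g.1 ∘ mergeVertex hba,
    (forall_image_adj_ne_iff (fun _ _ => G.mergeVertex_ne_of_adj_deleteEdges hba) g.1).1 g.2,
    by simp [mergeVertex, hba]⟩
  invFun f := ⟨f.1 ∘ Subtype.val,
    (forall_image_adj_ne_iff (fun _ _ => G.mergeVertex_ne_of_adj_deleteEdges hba) _).2 <| by
      simpa only [Function.comp_apply, apply_mergeVertex f.2.2] using f.2.1⟩
  left_inv g := by ext x; simp
  right_inv f := by
    ext x
    exact apply_mergeVertex f.2.2 hba x

def deleteEdgesColoringEquiv [DecidableEq α] (G : SimpleGraph V) (hab : G.Adj a b) :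
    {f : V → α // ∀ x y, (G.deleteEdges {s(a, b)}).Adj x y → f x ≠ f y} ≃
      {f : V → α // ∀ x y, G.Adj x y → f x ≠ f y} ⊕
        {g : {x // x ≠ a} → α // ∀ x y, (G.contractEdge hab.ne').Adj x y → g x ≠ g y} :=
  (Equiv.sumCompl fun f => f.1 a = f.1 b).symm.trans <| (Equiv.sumComm _ _).trans <|
    Equiv.sumCongr
      ((Equiv.subtypeSubtypeEquivSubtypeInter _ _).trans
        (Equiv.subtypeEquivRight fun f => (G.forall_adj_ne_iff_deleteEdges hab f).symm))
      ((Equiv.subtypeSubtypeEquivSubtypeInter _ _).trans (G.contractEdgeColoringEquiv hab.ne').symm)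

variable [Fintype V]

theorem numColorings_deleteEdges_eq_add (G : SimpleGraph V) [DecidableRel G.Adj]
    (hab : G.Adj a b) [DecidableRel (G.deleteEdges {s(a, b)}).Adj]
    [DecidableRel (G.contractEdge hab.ne').Adj] (k : ℕ) :
    (G.deleteEdges {s(a, b)}).numColorings k =
      G.numColorings k + (G.contractEdge hab.ne').numColorings k := by
  unfold numColorings
  rw [← Fintype.card_sum]
  exact Fintype.card_congr (G.deleteEdgesColoringEquiv hab)

theorem numColorings_bot [DecidableRel (⊥ : SimpleGraph V).Adj] (k : ℕ) :
    (⊥ : SimpleGraph V).numColorings k = k ^ Fintype.card V := by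
  simp [numColorings]

theorem exists_hasAlternatingCoeffs_eval_eq_numColorings (G : SimpleGraph V) [DecidableRel G.Adj] :
    ∃ P : ℤ[X], P.HasAlternatingCoeffs (Fintype.card V) ∧
      ∀ k : ℕ, P.eval (k : ℤ) = G.numColorings k := by
  induction hn : Fintype.card V using Nat.strong_induction_on generalizing V with | _ n ihn =>
  revert ‹DecidableRel G.Adj›
  induction G using WellFoundedLT.induction with | _ G ihG =>
  intro
  rcases eq_or_ne G ⊥ with rfl | hG
  · exact ⟨X ^ n, hasAlternatingCoeffs_X_pow n, fun k => by simp [numColorings_bot, hn]⟩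
  classical
  obtain ⟨a, b, hab⟩ := ne_bot_iff_exists_adj.1 hG
  obtain ⟨m, rfl⟩ : ∃ m, n = m + 1 := Nat.exists_eq_add_one.2 (hn ▸ Fintype.card_pos_iff.2 ⟨a⟩)
  have hlt : G.deleteEdges {s(a, b)} < G :=
    lt_of_le_not_ge (deleteEdges_le _) fun h => by simpa using h hab
  obtain ⟨P₁, hP₁, hP₁G⟩ := ihG _ hlt
  obtain ⟨P₂, hP₂, hP₂G⟩ := ihn m m.lt_succ_self (G.contractEdge hab.ne')
    (by rw [Fintype.card_subtype_compl, Fintype.card_subtype_eq, hn, Nat.add_sub_cancel])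
  refine ⟨P₁ - P₂, hP₁.sub hP₂, fun k => ?_⟩
  rw [eval_sub, hP₁G, hP₂G, G.numColorings_deleteEdges_eq_add hab]
  push_cast
  ring

end SimpleGraph

/-- The coefficients of the chromatic polynomial of a finite simple graph alternate in
sign: if `G` has `n` vertices and `P_G(λ) = Σ_{i=0}^{n} c_i λ^i`, then
`(−1)^{n−i} c_i ≥ 0` for every `0 ≤ i ≤ n`. -/
theorem chromaticPolynomial_coeff_alternate {V : Type*} [Fintype V] [DecidableEq V]
    (G : SimpleGraph V) [DecidableRel G.Adj] (P : Polynomial ℤ)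
    (hP : ∀ k : ℕ, P.eval (k : ℤ) = G.numColorings k) :
    ∀ i ≤ Fintype.card V, 0 ≤ (-1) ^ (Fintype.card V - i) * P.coeff i := by
  obtain ⟨Q, hQ, hQG⟩ := G.exists_hasAlternatingCoeffs_eval_eq_numColorings
  obtain rfl : P = Q := eq_of_eval_natCast_eq fun k => (hP k).trans (hQG k).symm
  exact fun i hi => hQ.coeff_nonneg hi
end

section
/- Turán's theorem: for natural numbers n and r with 0 < r, if G is a simple graph on n vertices that contains no clique of size r + 1 (no set of r + 1 pairwise adjacent vertices), then the number of edges of G is at most the number of edges of the Turán graph T(n, r). -/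
open SimpleGraph

theorem SimpleGraph.CliqueFree.card_edgeFinset_le_turanGraph {V : Type*} [Fintype V]
    {G : SimpleGraph V} [DecidableRel G.Adj] {r : ℕ} (hr : 0 < r) (hG : G.CliqueFree (r + 1)) :
    G.edgeFinset.card ≤ (turanGraph (Fintype.card V) r).edgeFinset.card := by
  let e : V ≃ Fin (Fintype.card V) := Fintype.equivFin V
  have iso : G ≃g G.map e.toEmbedding := Iso.map e G
  have hG' : (G.map e.toEmbedding).CliqueFree (r + 1) := hG.comap iso.symm.toEmbedding.isContained
  rw [iso.card_edgeFinset_eq]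
  exact (isTuranMaximal_turanGraph hr).2 hG'

theorem turan_theorem_general {n r : ℕ} (hr : 0 < r) {V : Type*} [Fintype V]
    (G : SimpleGraph V) [DecidableRel G.Adj] (hV : Fintype.card V = n)
    (hfree : G.CliqueFree (r + 1)) :
    G.edgeFinset.card ≤ (turanGraph n r).edgeFinset.card :=
  hV ▸ hfree.card_edgeFinset_le_turanGraph hr

/-- Turán's theorem: if `G` is a simple graph on `n` vertices containing no clique of
size `r + 1` (with `0 < r`), then the number of edges of `G` is at most the number of
edges of the Turán graph `T(n, r)`. -/
theorem turan_theorem {n r : ℕ} (hr : 0 < r) {V : Type*} [Fintype V] [DecidableEq V]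
    (G : SimpleGraph V) [DecidableRel G.Adj] (hV : Fintype.card V = n)
    (hfree : G.CliqueFree (r + 1)) :
    G.edgeFinset.card ≤ (turanGraph n r).edgeFinset.card :=
  turan_theorem_general hr G hV hfree
end

section
/- Compression does not decrease variance irregularity: let G be a finite simple graph on n ≥ 1 vertices, let u and v be distinct vertices of G, and let G' = G_{u→v} be the compression of G from u to v. Then σ(G') ≥ σ(G), where σ denotes the variance irregularity. -/
/-- The compression `G_{u→v}` of the simple graph `G` from vertex `u` to vertex `v`:
for each vertex `x` adjacent to `u` but neither adjacent nor equal to `v`, the edge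
`{x, u}` is deleted and the edge `{x, v}` is added. -/
def SimpleGraph.compress {V : Type*} [DecidableEq V] (G : SimpleGraph V) (u v : V) :
    SimpleGraph V where
  Adj x y :=
    (G.Adj x y ∧ ¬(x = u ∧ G.Adj u y ∧ ¬G.Adj v y ∧ y ≠ v) ∧
      ¬(y = u ∧ G.Adj u x ∧ ¬G.Adj v x ∧ x ≠ v)) ∨
    (x = v ∧ G.Adj u y ∧ ¬G.Adj v y ∧ y ≠ v) ∨
    (y = v ∧ G.Adj u x ∧ ¬G.Adj v x ∧ x ≠ v)
  symm := ⟨fun x y h => by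
    rcases h with ⟨h1, h2, h3⟩ | h | h
    · exact Or.inl ⟨h1.symm, h3, h2⟩
    · exact Or.inr (Or.inr h)
    · exact Or.inr (Or.inl h)⟩
  loopless := ⟨fun x => by
    rintro (⟨h, -, -⟩ | ⟨rfl, -, -, h⟩ | ⟨rfl, -, -, h⟩)
    · exact G.loopless.irrefl x h
    · exact h rfl
    · exact h rfl⟩

instance {V : Type*} [DecidableEq V] (G : SimpleGraph V) [DecidableRel G.Adj] (u v : V) :
    DecidableRel (G.compress u v).Adj := fun x y => by
  dsimp only [SimpleGraph.compress]; infer_instance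

/-- The variance irregularity of a finite simple graph `G` on `n` vertices with degrees
`d_1, …, d_n`: `σ(G) = (1/n) Σ d_i² − (1/n²) (Σ d_i)²`. -/
noncomputable def SimpleGraph.varianceIrregularity {V : Type*} [Fintype V] [DecidableEq V]
    (G : SimpleGraph V) [DecidableRel G.Adj] : ℝ :=
  (1 / (Fintype.card V : ℝ)) * ∑ w, (G.degree w : ℝ) ^ 2 -
    (1 / (Fintype.card V : ℝ) ^ 2) * (∑ w, (G.degree w : ℝ)) ^ 2


/-!
Let `M` be the set of neighbours of `u` that compression moves over to `v`. Compression
lowers the degree of `u` by `|M|`, raises that of `v` by `|M|` and fixes all other degrees,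
so the degree sum is unchanged. Since every neighbour of `u` that stays is a neighbour of
`v` (with `v` itself traded for `u`), the new degree of `u` is at most the old degree of `v`;
moving `|M|` units from `u` to `v` under this condition can only increase the sum of
squared degrees, and hence the variance.
-/

open Finset SimpleGraph

section Transfer

variable {ι R : Type*} [Fintype ι] {f g : ι → R} {u v : ι} {k : R}

theorem sum_eq_sum_of_transfer [AddCommGroup R] (huv : u ≠ v)
    (hoff : ∀ w, w ≠ u → w ≠ v → g w = f w) (hu : g u = f u - k) (hv : g v = f v + k) :
    ∑ w, g w = ∑ w, f w := by
  rw [← sub_eq_zero, ← sum_sub_distrib,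
    Fintype.sum_eq_add u v huv fun w hw => sub_eq_zero.2 (hoff w hw.1 hw.2), hu, hv]
  abel

theorem sum_sq_le_sum_sq_of_transfer [CommRing R] [LinearOrder R] [IsStrictOrderedRing R]
    (huv : u ≠ v) (hoff : ∀ w, w ≠ u → w ≠ v → g w = f w) (hu : g u = f u - k)
    (hv : g v = f v + k) (hk : 0 ≤ k) (hle : g u ≤ f v) :
    ∑ w, f w ^ 2 ≤ ∑ w, g w ^ 2 := by
  rw [← sub_nonneg, ← sum_sub_distrib,
    Fintype.sum_eq_add u v huv fun w hw => by rw [hoff w hw.1 hw.2, sub_self], hu, hv]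
  calc (0 : R) ≤ 2 * k * (f v - g u) := mul_nonneg (mul_nonneg zero_le_two hk) (sub_nonneg.2 hle)
    _ = _ := by rw [hu]; ring

end Transfer

namespace SimpleGraph

variable {V : Type*} [DecidableEq V]

theorem compress_adj_iff {G : SimpleGraph V} {u v x y : V} : (G.compress u v).Adj x y ↔
    (G.Adj x y ∧ ¬(x = u ∧ G.Adj u y ∧ ¬G.Adj v y ∧ y ≠ v) ∧
      ¬(y = u ∧ G.Adj u x ∧ ¬G.Adj v x ∧ x ≠ v)) ∨
    (x = v ∧ G.Adj u y ∧ ¬G.Adj v y ∧ y ≠ v) ∨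
    (y = v ∧ G.Adj u x ∧ ¬G.Adj v x ∧ x ≠ v) := Iff.rfl

variable [Fintype V]

theorem varianceIrregularity_le_of_sum_eq_of_sum_sq_le (G H : SimpleGraph V)
    [DecidableRel G.Adj] [DecidableRel H.Adj]
    (hsum : ∑ w, (H.degree w : ℝ) = ∑ w, (G.degree w : ℝ))
    (hsq : ∑ w, (G.degree w : ℝ) ^ 2 ≤ ∑ w, (H.degree w : ℝ) ^ 2) :
    G.varianceIrregularity ≤ H.varianceIrregularity := by
  unfold varianceIrregularity
  rw [hsum]
  gcongr

variable (G : SimpleGraph V) [DecidableRel G.Adj] (u v : V)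

/-- The neighbours `x` of `u` whose edge `{x, u}` compression replaces by `{x, v}`. -/
def compressMoved : Finset V := (G.neighborFinset u).filter fun x => ¬G.Adj v x ∧ x ≠ v

variable {G u v}

theorem mem_compressMoved {x : V} :
    x ∈ G.compressMoved u v ↔ G.Adj u x ∧ ¬G.Adj v x ∧ x ≠ v := by
  simp [compressMoved]

theorem neighborFinset_compress_left (huv : u ≠ v) :
    (G.compress u v).neighborFinset u = G.neighborFinset u \ G.compressMoved u v := by
  ext y
  simp only [mem_sdiff, mem_neighborFinset, mem_compressMoved, compress_adj_iff]
  have := G.loopless.irrefl u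
  tauto

theorem neighborFinset_compress_right (huv : u ≠ v) :
    (G.compress u v).neighborFinset v = G.neighborFinset v ∪ G.compressMoved u v := by
  ext y
  simp only [mem_union, mem_neighborFinset, mem_compressMoved, compress_adj_iff]
  have := huv.symm
  tauto

theorem degree_compress_left (huv : u ≠ v) :
    (G.compress u v).degree u + #(G.compressMoved u v) = G.degree u := by
  rw [degree, degree, neighborFinset_compress_left huv]
  exact card_sdiff_add_card_eq_card (filter_subset _ _)

theorem degree_compress_right (huv : u ≠ v) :
    (G.compress u v).degree v = G.degree v + #(G.compressMoved u v) := by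
  rw [degree, degree, neighborFinset_compress_right huv]
  refine card_union_of_disjoint (Finset.disjoint_left.2 fun x hx hx' => ?_)
  exact (mem_compressMoved.1 hx').2.1 ((mem_neighborFinset _ _ _).1 hx)

theorem degree_compress_of_ne {w : V} (hwu : w ≠ u) (hwv : w ≠ v) :
    (G.compress u v).degree w = G.degree w := by
  by_cases hw : w ∈ G.compressMoved u v
  · obtain ⟨hadj, hnadj, -⟩ := mem_compressMoved.1 hw
    have hnbr : (G.compress u v).neighborFinset w = cons v ((G.neighborFinset w).erase u)
        fun h => hnadj ((mem_neighborFinset _ _ _).1 (mem_of_mem_erase h)).symm := by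
      ext y
      simp only [mem_cons, mem_erase, mem_neighborFinset, compress_adj_iff]
      have := fun h : G.Adj w v => hnadj h.symm
      tauto
    rw [degree, degree, hnbr, card_cons, card_erase_add_one]
    exact (mem_neighborFinset _ _ _).2 hadj.symm
  · rw [mem_compressMoved] at hw
    have hnbr : (G.compress u v).neighborFinset w = G.neighborFinset w := by
      ext y
      simp only [mem_neighborFinset, compress_adj_iff]
      tauto
    rw [degree, degree, hnbr]

/-- The swap `u ↔ v` injects the neighbours of `u` that stay into the neighbours of `v`. -/
theorem card_neighborFinset_sdiff_compressMoved_le :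
    #(G.neighborFinset u \ G.compressMoved u v) ≤ G.degree v := by
  refine card_le_card_of_injOn (Equiv.swap u v) (fun x hx => ?_) (Equiv.injective _).injOn
  simp only [coe_sdiff, Set.mem_sdiff, mem_coe, mem_neighborFinset, mem_compressMoved] at hx ⊢
  obtain ⟨hux, hstay⟩ := hx
  by_cases hxv : x = v
  · subst hxv
    rw [Equiv.swap_apply_right]
    exact hux.symm
  · rw [Equiv.swap_apply_of_ne_of_ne (G.ne_of_adj hux).symm hxv]
    by_contra hvx
    exact hstay ⟨hux, hvx, hxv⟩

theorem degree_compress_left_le (huv : u ≠ v) : (G.compress u v).degree u ≤ G.degree v := by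
  rw [degree, neighborFinset_compress_left huv]
  exact card_neighborFinset_sdiff_compressMoved_le

end SimpleGraph

theorem compress_varianceIrregularity_ge_general {V : Type*} [Fintype V] [DecidableEq V]
    (G : SimpleGraph V) [DecidableRel G.Adj] (u v : V) (huv : u ≠ v) :
    (G.compress u v).varianceIrregularity ≥ G.varianceIrregularity := by
  set k := #(G.compressMoved u v)
  have hoff : ∀ w, w ≠ u → w ≠ v → ((G.compress u v).degree w : ℝ) = G.degree w :=
    fun w hwu hwv => by rw [degree_compress_of_ne hwu hwv]
  have hu : ((G.compress u v).degree u : ℝ) = G.degree u - k := by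
    rw [eq_sub_iff_add_eq]
    exact_mod_cast degree_compress_left huv
  have hv : ((G.compress u v).degree v : ℝ) = G.degree v + k := by
    exact_mod_cast degree_compress_right huv
  have hle : ((G.compress u v).degree u : ℝ) ≤ G.degree v := by
    exact_mod_cast degree_compress_left_le huv
  exact varianceIrregularity_le_of_sum_eq_of_sum_sq_le _ _
    (sum_eq_sum_of_transfer huv hoff hu hv)
    (sum_sq_le_sum_sq_of_transfer huv hoff hu hv k.cast_nonneg hle)

/-- Compression does not decrease variance irregularity: if `G'` is the compression of
`G` from `u` to `v`, then `σ(G') ≥ σ(G)`. -/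
theorem compress_varianceIrregularity_ge {V : Type*} [Fintype V] [DecidableEq V]
    (G : SimpleGraph V) [DecidableRel G.Adj] (u v : V) (huv : u ≠ v)
    (hn : 1 ≤ Fintype.card V) :
    (G.compress u v).varianceIrregularity ≥ G.varianceIrregularity :=
  compress_varianceIrregularity_ge_general G u v huv
end
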